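/- Let A be an n×n real tridiagonal matrix with diagonal b_i, subdiagonal a_i, superdiagonal c_i, and fix 1 ≤ k ≤ n. Suppose the sweep coefficients α₁ = −c₁/b₁ and α_i = −c_i/(b_i + a_{i−1} α_{i−1}) for 2 ≤ i ≤ k−1 are well defined (all denominators nonzero). Then the system B^L_k Z = e_k has the unique solution with components Z_k = 1 and Z_i = ∏_{j=i}^{k−1} α_j for 1 ≤ i ≤ k−1. -/

import Mathlib

/-!
Rows `1, …, k-1` of `B^L_k Z = e_k` are the first `k-1` equations of the tridiagonal system
`A Z = 0`, and the last row says `Z_k = 1`. Forward elimination (the Thomas sweep) turns these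
equations, one at a time, into the equivalent relations `Z_i = α_i Z_{i+1}`; back substitution
then gives the product formula. Every step being an equivalence, the solution is unique.
-/

open Matrix Finset

/-- The diagonals `a`, `b`, `c` are indexed from `1` as in the paper, the unknowns `w` and the
rows from `0`. -/
def tridiagRow {R : Type*} [NonUnitalNonAssocSemiring R] (a b c w : ℕ → R) : ℕ → R
  | 0 => b 1 * w 0 + c 1 * w 1
  | s + 1 => a (s + 1) * w s + b (s + 2) * w (s + 1) + c (s + 2) * w (s + 2)

theorem mul_add_mul_eq_zero_iff_eq_neg_div_mul {K : Type*} [Field K] {p q y z : K} (hp : p ≠ 0) :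
    p * y + q * z = 0 ↔ y = -q / p * z := by
  rw [div_mul_eq_mul_div, eq_div_iff hp]
  constructor <;> intro h <;> linear_combination h

/-- Forward elimination: once rows `0, …, s-1` have been turned into `w t = α (t+1) * w (t+1)`,
row `s` is equivalent to the next such relation. -/
theorem forall_tridiagRow_eq_zero_iff {K : Type*} [Field K] {a b c α : ℕ → K} (w : ℕ → K)
    (m : ℕ) (hα1 : α 1 = -c 1 / b 1)
    (hαrec : ∀ i, 2 ≤ i → i ≤ m → α i = -c i / (b i + a (i - 1) * α (i - 1)))
    (hb1 : b 1 ≠ 0) (hden : ∀ i, 2 ≤ i → i ≤ m → b i + a (i - 1) * α (i - 1) ≠ 0) :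
    (∀ s < m, tridiagRow a b c w s = 0) ↔ ∀ s < m, w s = α (s + 1) * w (s + 1) := by
  induction m with
  | zero => simp
  | succ m ih =>
    rw [Nat.forall_lt_succ_right, Nat.forall_lt_succ_right,
      ih (fun i h1 h2 => hαrec i h1 (by omega)) (fun i h1 h2 => hden i h1 (by omega))]
    refine and_congr_right fun hprev => ?_
    cases m with
    | zero => rw [hα1]; exact mul_add_mul_eq_zero_iff_eq_neg_div_mul hb1
    | succ m =>
      have hrec := hαrec (m + 2) (by omega) le_rfl
      have hd := hden (m + 2) (by omega) le_rfl
      rw [show m + 2 - 1 = m + 1 from rfl] at hrec hd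
      rw [hrec, ← mul_add_mul_eq_zero_iff_eq_neg_div_mul hd, tridiagRow, hprev m (by omega)]
      ring_nf

theorem eq_one_and_eq_mul_iff_eq_prod_Icc {M : Type*} [CommMonoid M] (α w : ℕ → M) (m : ℕ) :
    (w m = 1 ∧ ∀ s < m, w s = α (s + 1) * w (s + 1)) ↔
      ∀ s ≤ m, w s = ∏ j ∈ Icc (s + 1) m, α j := by
  constructor
  · rintro ⟨hm, hrec⟩ s hs
    induction hs using Nat.decreasingInduction with
    | self => simp [hm]
    | of_succ s hs ih =>
      rw [hrec s hs, ih, ← mul_prod_Ioc_eq_prod_Icc (a := s + 1) hs, Icc_add_one_left_eq_Ioc]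
  · intro h
    refine ⟨by simp [h m le_rfl], fun s hs => ?_⟩
    rw [h s hs.le, h (s + 1) hs, ← mul_prod_Ioc_eq_prod_Icc (a := s + 1) hs,
      Icc_add_one_left_eq_Ioc]

section Tridiagonal

variable {R : Type*} [NonUnitalNonAssocSemiring R] {k : ℕ}

def IsTridiagonal (M : Matrix (Fin k) (Fin k) R) : Prop :=
  ∀ i j : Fin k, (i : ℕ) + 1 < j ∨ (j : ℕ) + 1 < i → M i j = 0

theorem IsTridiagonal.mulVec_apply_zero {M : Matrix (Fin k) (Fin k) R} (hM : IsTridiagonal M)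
    (w : ℕ → R) (hk : 1 < k) :
    (M *ᵥ fun i => w i) ⟨0, by omega⟩ =
      M ⟨0, by omega⟩ ⟨0, by omega⟩ * w 0 + M ⟨0, by omega⟩ ⟨1, hk⟩ * w 1 := by
  refine sum_eq_add (⟨0, by omega⟩ : Fin k) ⟨1, hk⟩ (by simp [Fin.ext_iff])
    (fun j _ hj => ?_) (fun h => absurd (mem_univ _) h) (fun h => absurd (mem_univ _) h)
  simp only [ne_eq, Fin.ext_iff] at hj
  exact mul_eq_zero_of_left (hM _ _ (by dsimp only; omega)) _

theorem IsTridiagonal.mulVec_apply_succ {M : Matrix (Fin k) (Fin k) R} (hM : IsTridiagonal M)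
    (w : ℕ → R) (s : ℕ) (hs : s + 2 < k) :
    (M *ᵥ fun i => w i) ⟨s + 1, by omega⟩ =
      M ⟨s + 1, by omega⟩ ⟨s, by omega⟩ * w s
        + M ⟨s + 1, by omega⟩ ⟨s + 1, by omega⟩ * w (s + 1)
        + M ⟨s + 1, by omega⟩ ⟨s + 2, hs⟩ * w (s + 2) := by
  simp only [mulVec, dotProduct]
  rw [← sum_subset (subset_univ {⟨s, by omega⟩, ⟨s + 1, by omega⟩, ⟨s + 2, hs⟩})]
  · rw [sum_insert (by simp [Fin.ext_iff]), sum_pair (by simp [Fin.ext_iff]), add_assoc]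
  · intro j _ hj
    simp only [mem_insert, mem_singleton, Fin.ext_iff] at hj
    rw [hM _ _ (by dsimp only; omega), zero_mul]

end Tridiagonal

section LeftBlock

variable {R : Type*} [NonAssocSemiring R] {n k : ℕ}

/-- The paper's `B^L_k`. -/
def leftBlock (A : Matrix (Fin n) (Fin n) R) (hkn : k ≤ n) : Matrix (Fin k) (Fin k) R :=
  fun s r => if (s : ℕ) = k - 1 then (if r = s then 1 else 0) else A (s.castLE hkn) (r.castLE hkn)

variable {A : Matrix (Fin n) (Fin n) R} {hkn : k ≤ n}

theorem leftBlock_apply_of_lt {s : Fin k} (hs : (s : ℕ) < k - 1) (r : Fin k) :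
    leftBlock A hkn s r = A (s.castLE hkn) (r.castLE hkn) :=
  if_neg hs.ne

theorem isTridiagonal_leftBlock (hA : IsTridiagonal A) : IsTridiagonal (leftBlock A hkn) := by
  intro s r hsr
  unfold leftBlock
  split_ifs with hs hrs
  · subst hrs; omega
  · rfl
  · exact hA _ _ hsr

theorem leftBlock_mulVec_apply_last (hk : k - 1 < k) (v : Fin k → R) :
    (leftBlock A hkn *ᵥ v) ⟨k - 1, hk⟩ = v ⟨k - 1, hk⟩ := by
  have hrow : leftBlock A hkn ⟨k - 1, hk⟩ = Pi.single ⟨k - 1, hk⟩ 1 := by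
    funext r
    simp [leftBlock, Pi.single_apply]
  rw [mulVec, hrow, single_dotProduct, one_mul]

theorem leftBlock_mulVec_apply_of_lt (hA : IsTridiagonal A) {a b c : ℕ → R}
    (hb : ∀ i : Fin n, b (i + 1) = A i i)
    (ha : ∀ i j : Fin n, (i : ℕ) = j + 1 → a i = A i j)
    (hc : ∀ i j : Fin n, (j : ℕ) = i + 1 → c j = A i j)
    (w : ℕ → R) {s : ℕ} (hs : s < k - 1) :
    (leftBlock A hkn *ᵥ fun i => w i) ⟨s, by omega⟩ = tridiagRow a b c w s := by
  cases s with
  | zero =>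
    rw [(isTridiagonal_leftBlock hA).mulVec_apply_zero w (by omega), tridiagRow,
      leftBlock_apply_of_lt hs, leftBlock_apply_of_lt hs, ← hb, ← hc _ _ rfl]
    rfl
  | succ s =>
    rw [(isTridiagonal_leftBlock hA).mulVec_apply_succ w s (by omega), tridiagRow,
      leftBlock_apply_of_lt hs, leftBlock_apply_of_lt hs, leftBlock_apply_of_lt hs,
      ← ha _ _ rfl, ← hb, ← hc _ _ rfl]
    rfl

theorem leftBlock_mulVec_eq_single_iff (hA : IsTridiagonal A) {a b c : ℕ → R}
    (hb : ∀ i : Fin n, b (i + 1) = A i i)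
    (ha : ∀ i j : Fin n, (i : ℕ) = j + 1 → a i = A i j)
    (hc : ∀ i j : Fin n, (j : ℕ) = i + 1 → c j = A i j)
    (hk : k - 1 < k) (w : ℕ → R) :
    leftBlock A hkn *ᵥ (fun i => w i) = Pi.single ⟨k - 1, hk⟩ 1 ↔
      w (k - 1) = 1 ∧ ∀ s < k - 1, tridiagRow a b c w s = 0 := by
  rw [funext_iff, Fin.forall_iff]
  constructor
  · intro h
    refine ⟨?_, fun s hs => ?_⟩
    · simpa [leftBlock_mulVec_apply_last hk] using h (k - 1) hk
    · simpa [leftBlock_mulVec_apply_of_lt hA hb ha hc w hs, Pi.single_apply, Fin.ext_iff,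
        hs.ne] using h s (by omega)
  · rintro ⟨hlast, hrows⟩ s hs
    rcases (by omega : s = k - 1 ∨ s < k - 1) with rfl | hs'
    · simp [leftBlock_mulVec_apply_last hk, hlast]
    · simp [leftBlock_mulVec_apply_of_lt hA hb ha hc w hs', hrows s hs', Fin.ext_iff,
        hs'.ne]

end LeftBlock

/-- Indices of `B` and `Z` (of type `Fin k`) start at `0`; those of `b`, `a`, `c`, `α` at `1`,
as in the paper. -/
theorem stmt_8 (n k : ℕ) (hk : 1 ≤ k) (hkn : k ≤ n)
    (A : Matrix (Fin n) (Fin n) ℝ)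
    (htri : ∀ i j : Fin n, (i : ℕ) + 1 < (j : ℕ) ∨ (j : ℕ) + 1 < (i : ℕ) → A i j = 0)
    (b a c : ℕ → ℝ)
    (hb : ∀ i, ∀ _ : 1 ≤ i, ∀ _ : i ≤ n,
      b i = A ⟨i - 1, by omega⟩ ⟨i - 1, by omega⟩)
    (ha : ∀ i, ∀ _ : 1 ≤ i, ∀ _ : i ≤ n - 1,
      a i = A ⟨i, by omega⟩ ⟨i - 1, by omega⟩)
    (hc : ∀ i, ∀ _ : 1 ≤ i, ∀ _ : i ≤ n - 1,
      c i = A ⟨i - 1, by omega⟩ ⟨i, by omega⟩)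
    (α : ℕ → ℝ) (hα1 : α 1 = -c 1 / b 1)
    (hαrec : ∀ i, 2 ≤ i → i ≤ k - 1 →
      α i = -c i / (b i + a (i - 1) * α (i - 1)))
    (hb1 : b 1 ≠ 0)
    (hden : ∀ i, 2 ≤ i → i ≤ k - 1 → b i + a (i - 1) * α (i - 1) ≠ 0)
    (B : Matrix (Fin k) (Fin k) ℝ)
    (hB : ∀ s r : Fin k, B s r =
      if (s : ℕ) = k - 1 then (if r = s then 1 else 0)
      else A ⟨(s : ℕ), by have := s.isLt; omega⟩ ⟨(r : ℕ), by have := r.isLt; omega⟩)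
    (Z : Fin k → ℝ)
    (hZ : ∀ s : Fin k, Z s =
      if (s : ℕ) = k - 1 then 1 else ∏ j ∈ Finset.Icc ((s : ℕ) + 1) (k - 1), α j) :
    B.mulVec Z = Pi.single ⟨k - 1, by omega⟩ 1 ∧
      ∀ Z' : Fin k → ℝ, B.mulVec Z' = Pi.single ⟨k - 1, by omega⟩ 1 → Z' = Z := by
  obtain rfl : B = leftBlock A hkn := Matrix.ext hB
  have hZ' : Z = fun s : Fin k => ∏ j ∈ Icc ((s : ℕ) + 1) (k - 1), α j := by
    funext s
    rw [hZ]
    split_ifs with h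
    · simp [h]
    · rfl
  have hb' : ∀ i : Fin n, b (i + 1) = A i i := fun i => hb (i + 1) (by omega) (by omega)
  have ha' : ∀ i j : Fin n, (i : ℕ) = j + 1 → a i = A i j := by
    rintro ⟨_, hi⟩ ⟨j, _⟩ (rfl : _ = j + 1)
    exact ha (j + 1) (by omega) (by omega)
  have hc' : ∀ i j : Fin n, (j : ℕ) = i + 1 → c j = A i j := by
    rintro ⟨i, _⟩ ⟨_, hj⟩ (rfl : _ = i + 1)
    exact hc (i + 1) (by omega) (by omega)
  have hsol : ∀ W, leftBlock A hkn *ᵥ W = Pi.single ⟨k - 1, by omega⟩ 1 ↔ W = Z := by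
    intro W
    obtain ⟨w, rfl⟩ : ∃ w : ℕ → ℝ, W = fun s : Fin k => w s :=
      ⟨fun i => if h : i < k then W ⟨i, h⟩ else 0, by funext s; simp⟩
    rw [leftBlock_mulVec_eq_single_iff htri hb' ha' hc' (by omega),
      forall_tridiagRow_eq_zero_iff w (k - 1) hα1 hαrec hb1 hden,
      eq_one_and_eq_mul_iff_eq_prod_Icc, hZ', funext_iff, Fin.forall_iff]
    exact forall_congr' fun s => ⟨fun h hs => h (by omega), fun h hs => h (by omega)⟩
  exact ⟨(hsol Z).2 rfl, fun W hW => (hsol W).1 hW⟩
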